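/- arXiv:2411.10107 — 3 statements merged into one kernel-verified Lean document; each statement's English description precedes it below -/
import Mathlib

section
/- Let f be a violation-free DMAC instance with unit displacements on the grid G = {1,…,n}^d, let 0 ≤ i ≤ d, let j be a coordinate with j > i, let ε ∈ {−1, +1}, and let k ∈ ℕ. Suppose x is the least fixed point of the i-slice through x, that x + ε·k·e_j ∈ G, and that y is the least fixed point of the i-slice through x + ε·k·e_j. Then ‖y − x‖∞ ≤ k. -/
/-- Membership in the grid `{1, …, n}^d ⊆ ℤ^d`. -/
def inGrid (n : ℕ) {d : ℕ} (x : Fin d → ℤ) : Prop :=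
  ∀ i, 1 ≤ x i ∧ x i ≤ (n : ℤ)

/-- The ℓ∞ distance `‖x − y‖∞ = max_i |x_i − y_i|` (as a natural number). -/
def linf {d : ℕ} (x y : Fin d → ℤ) : ℕ :=
  Finset.univ.sup fun i => (x i - y i).natAbs

lemma linf_le_iff {d : ℕ} (x y : Fin d → ℤ) (k : ℕ) :
    linf x y ≤ k ↔ ∀ m, (x m - y m).natAbs ≤ k := by
  unfold linf
  constructor
  · intro h m
    exact le_trans (Finset.le_sup (f := fun i => (x i - y i).natAbs) (Finset.mem_univ m)) h
  · intro h
    exact Finset.sup_le fun m _ => h m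

lemma band_lemma {d : ℕ} (n : ℕ) (f : (Fin d → ℤ) → (Fin d → ℤ))
    (hnonexp : ∀ x y, inGrid n x → inGrid n y → linf (f x) (f y) ≤ linf x y)
    (i k : ℕ) (p t : Fin d → ℤ) (hpG : inGrid n p) (htG : inGrid n t)
    (hpfix : ∀ m : Fin d, (m : ℕ) < i → f p m = p m)
    (hlinf : linf t p ≤ k) :
    ∀ m : Fin d, (m : ℕ) < i → (f t m - p m).natAbs ≤ k := by
  intro m hm
  have h1 : (f t m - f p m).natAbs ≤ linf (f t) (f p) :=
    (linf_le_iff (f t) (f p) (linf (f t) (f p))).1 le_rfl m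
  have h2 := hnonexp t p htG hpG
  rw [hpfix m hm] at h1
  omega

lemma descend {d : ℕ} (n : ℕ) (f : (Fin d → ℤ) → (Fin d → ℤ))
    (hrange : ∀ x, inGrid n x → inGrid n (f x))
    (hmono : ∀ x y, inGrid n x → inGrid n y → x ≤ y → f x ≤ f y)
    (hnonexp : ∀ x y, inGrid n x → inGrid n y → linf (f x) (f y) ≤ linf x y)
    (i k : ℕ) (p c : Fin d → ℤ)
    (hpG : inGrid n p)
    (hpfix : ∀ m : Fin d, (m : ℕ) < i → f p m = p m)
    (hchigh : ∀ m : Fin d, i ≤ (m : ℕ) → (c m - p m).natAbs ≤ k) :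
    ∀ N (t : Fin d → ℤ), (∑ m, (t m - 1).toNat) ≤ N →
      inGrid n t → (∀ m : Fin d, i ≤ (m : ℕ) → t m = c m) →
      (∀ m : Fin d, (m : ℕ) < i → (t m - p m).natAbs ≤ k) →
      (∀ m : Fin d, (m : ℕ) < i → f t m ≤ t m) →
      ∃ z, inGrid n z ∧ (∀ m : Fin d, i ≤ (m : ℕ) → z m = c m) ∧
        (∀ m : Fin d, (m : ℕ) < i → (z m - p m).natAbs ≤ k) ∧
        (∀ m : Fin d, (m : ℕ) < i → f z m = z m) ∧ z ≤ t := by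
  intro N
  induction N using Nat.strong_induction_on with
  | _ N ih =>
    intro t hμ htG hts htb htp
    by_cases hfix : ∀ m : Fin d, (m : ℕ) < i → f t m = t m
    · exact ⟨t, htG, hts, htb, hfix, le_refl t⟩
    · push_neg at hfix
      obtain ⟨m₀, hm₀, hne⟩ := hfix
      set t' : Fin d → ℤ := fun m => if (m : ℕ) < i then f t m else t m with ht'
      have ht'lo : ∀ m : Fin d, (m : ℕ) < i → t' m = f t m := by
        intro m hm; simp only [ht', if_pos hm]
      have ht'hi : ∀ m : Fin d, ¬ (m : ℕ) < i → t' m = t m := by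
        intro m hm; simp only [ht', if_neg hm]
      have hlinf : linf t p ≤ k := by
        rw [linf_le_iff]
        intro m
        by_cases h : (m : ℕ) < i
        · exact htb m h
        · rw [hts m (le_of_not_gt h)]; exact hchigh m (le_of_not_gt h)
      have hband := band_lemma n f hnonexp i k p t hpG htG hpfix hlinf
      have htG' : inGrid n t' := by
        intro m
        by_cases h : (m : ℕ) < i
        · rw [ht'lo m h]; exact hrange t htG m
        · rw [ht'hi m h]; exact htG m
      have hle : ∀ m : Fin d, t' m ≤ t m := by
        intro m
        by_cases h : (m : ℕ) < i
        · rw [ht'lo m h]; exact htp m h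
        · rw [ht'hi m h]
      have hle' : t' ≤ t := hle
      have hμ' : (∑ m, (t' m - 1).toNat) < (∑ m, (t m - 1).toNat) := by
        apply Finset.sum_lt_sum
        · intro m _
          have h1 : t' m ≤ t m := hle m
          have h2 : 1 ≤ t' m := (htG' m).1
          omega
        · refine ⟨m₀, Finset.mem_univ _, ?_⟩
          have h1 : t' m₀ = f t m₀ := ht'lo m₀ hm₀
          have h2 : f t m₀ ≤ t m₀ := htp m₀ hm₀
          have h3 : 1 ≤ t' m₀ := (htG' m₀).1
          omega
      have hts' : ∀ m : Fin d, i ≤ (m : ℕ) → t' m = c m := by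
        intro m hm
        rw [ht'hi m (Nat.not_lt.2 hm)]
        exact hts m hm
      have htb' : ∀ m : Fin d, (m : ℕ) < i → (t' m - p m).natAbs ≤ k := by
        intro m hm
        rw [ht'lo m hm]
        exact hband m hm
      have htp' : ∀ m : Fin d, (m : ℕ) < i → f t' m ≤ t' m := by
        intro m hm
        have h1 : f t' m ≤ f t m := hmono t' t htG' htG hle' m
        rw [ht'lo m hm]
        exact h1
      obtain ⟨z, h1, h2, h3, h4, h5⟩ :=
        ih (∑ m, (t' m - 1).toNat) (lt_of_lt_of_le hμ' hμ) t' le_rfl htG' hts' htb' htp'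
      exact ⟨z, h1, h2, h3, h4, le_trans h5 hle'⟩

/-- If `x` is the least fixed point of its `i`-slice and `y` is the least
fixed point of the `i`-slice through `x + ε·k·e_j` (for a fixed coordinate
`j > i`), then `‖y − x‖∞ ≤ k`. -/
theorem lfps_distance_bound (d n : ℕ) (hn : 1 ≤ n)
    (f : (Fin d → ℤ) → (Fin d → ℤ))
    (hrange : ∀ x, inGrid n x → inGrid n (f x))
    (hmono : ∀ x y, inGrid n x → inGrid n y → x ≤ y → f x ≤ f y)
    (hnonexp : ∀ x y, inGrid n x → inGrid n y → linf (f x) (f y) ≤ linf x y)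
    (hunit : ∀ x, inGrid n x → linf (f x) x ≤ 1)
    (i : ℕ) (hi : i ≤ d)
    (j : Fin d) (hj : i ≤ (j : ℕ))
    (ε : ℤ) (hε : ε = 1 ∨ ε = -1)
    (k : ℕ)
    (x y : Fin d → ℤ)
    -- `x` is the least fixed point of the `i`-slice through `x`
    (hxG : inGrid n x)
    (hxfix : ∀ m : Fin d, (m : ℕ) < i → f x m = x m)
    (hxleast : ∀ z, inGrid n z → (∀ m : Fin d, i ≤ (m : ℕ) → z m = x m) →
      (∀ m : Fin d, (m : ℕ) < i → f z m = z m) → x ≤ z)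
    -- the point `x + ε·k·e_j` lies in the grid
    (hx'G : inGrid n (Function.update x j (x j + ε * k)))
    -- `y` is the least fixed point of the `i`-slice through `x + ε·k·e_j`
    (hyG : inGrid n y)
    (hyslice : ∀ m : Fin d, i ≤ (m : ℕ) → y m = Function.update x j (x j + ε * k) m)
    (hyfix : ∀ m : Fin d, (m : ℕ) < i → f y m = y m)
    (hyleast : ∀ z, inGrid n z → (∀ m : Fin d, i ≤ (m : ℕ) → z m = y m) →
      (∀ m : Fin d, (m : ℕ) < i → f z m = z m) → y ≤ z) :
    linf y x ≤ k := by
  set c : Fin d → ℤ := Function.update x j (x j + ε * k) with hc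
  -- the anchor differs from x by at most k on every coordinate
  have hchigh : ∀ m : Fin d, (c m - x m).natAbs ≤ k := by
    intro m
    by_cases hmj : m = j
    · subst hmj
      simp only [hc, Function.update_self]
      rcases hε with rfl | rfl <;> simp
    · simp only [hc, Function.update_of_ne hmj]
      simp
  have hhigh : ∀ m : Fin d, i ≤ (m : ℕ) → (y m - x m).natAbs ≤ k := by
    intro m hm
    rw [hyslice m hm]
    exact hchigh m
  ----------------------------------------------------------------
  -- Application 1: a fixed point z of y's slice within the band around x
  ----------------------------------------------------------------
  set t1 : Fin d → ℤ := fun m => if i ≤ (m : ℕ) then c m else min (x m + k) n with ht1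
  have ht1lo : ∀ m : Fin d, (m : ℕ) < i → t1 m = min (x m + (k : ℤ)) n := by
    intro m hm; simp only [ht1, if_neg (Nat.not_le.2 hm)]
  have ht1s : ∀ m : Fin d, i ≤ (m : ℕ) → t1 m = c m := by
    intro m hm; simp only [ht1, if_pos hm]
  have ht1G : inGrid n t1 := by
    intro m
    by_cases h : i ≤ (m : ℕ)
    · rw [ht1s m h]; exact hx'G m
    · rw [ht1lo m (Nat.not_le.1 h)]
      have h1 := hxG m
      constructor
      · apply le_min <;> omega
      · exact min_le_right _ _
  have ht1b : ∀ m : Fin d, (m : ℕ) < i → (t1 m - x m).natAbs ≤ k := by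
    intro m hm
    rw [ht1lo m hm]
    have h1 := hxG m
    have h2 : min (x m + (k : ℤ)) n ≤ x m + k := min_le_left _ _
    have h3 : x m ≤ min (x m + (k : ℤ)) n := le_min (by omega) h1.2
    omega
  have hlinf1 : linf t1 x ≤ k := by
    rw [linf_le_iff]
    intro m
    by_cases h : (m : ℕ) < i
    · exact ht1b m h
    · rw [ht1s m (le_of_not_gt h)]; exact hchigh m
  have ht1p : ∀ m : Fin d, (m : ℕ) < i → f t1 m ≤ t1 m := by
    intro m hm
    have h1 := band_lemma n f hnonexp i k x t1 hxG ht1G hxfix hlinf1 m hm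
    have h2 : f t1 m ≤ (n : ℤ) := (hrange t1 ht1G m).2
    rw [ht1lo m hm]
    apply le_min <;> omega
  obtain ⟨z, hzG, hzs, hzb, hzfix, -⟩ :=
    descend n f hrange hmono hnonexp i k x c hxG hxfix (fun m _ => hchigh m)
      (∑ m, (t1 m - 1).toNat) t1 le_rfl ht1G ht1s ht1b ht1p
  have hyz : ∀ m : Fin d, y m ≤ z m :=
    hyleast z hzG (fun m hm => (hzs m hm).trans (hyslice m hm).symm) hzfix
  ----------------------------------------------------------------
  -- Application 2: a fixed point w of x's slice within the band around y
  ----------------------------------------------------------------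
  have hyhigh : ∀ m : Fin d, i ≤ (m : ℕ) → (x m - y m).natAbs ≤ k := by
    intro m hm
    have := hhigh m hm
    omega
  set t2 : Fin d → ℤ := fun m => if i ≤ (m : ℕ) then x m else min (y m + k) n with ht2
  have ht2lo : ∀ m : Fin d, (m : ℕ) < i → t2 m = min (y m + (k : ℤ)) n := by
    intro m hm; simp only [ht2, if_neg (Nat.not_le.2 hm)]
  have ht2s : ∀ m : Fin d, i ≤ (m : ℕ) → t2 m = x m := by
    intro m hm; simp only [ht2, if_pos hm]
  have ht2G : inGrid n t2 := by
    intro m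
    by_cases h : i ≤ (m : ℕ)
    · rw [ht2s m h]; exact hxG m
    · rw [ht2lo m (Nat.not_le.1 h)]
      have h1 := hyG m
      constructor
      · apply le_min <;> omega
      · exact min_le_right _ _
  have ht2b : ∀ m : Fin d, (m : ℕ) < i → (t2 m - y m).natAbs ≤ k := by
    intro m hm
    rw [ht2lo m hm]
    have h1 := hyG m
    have h2 : min (y m + (k : ℤ)) n ≤ y m + k := min_le_left _ _
    have h3 : y m ≤ min (y m + (k : ℤ)) n := le_min (by omega) h1.2
    omega
  have hlinf2 : linf t2 y ≤ k := by
    rw [linf_le_iff]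
    intro m
    by_cases h : (m : ℕ) < i
    · exact ht2b m h
    · rw [ht2s m (le_of_not_gt h)]; exact hyhigh m (le_of_not_gt h)
  have ht2p : ∀ m : Fin d, (m : ℕ) < i → f t2 m ≤ t2 m := by
    intro m hm
    have h1 := band_lemma n f hnonexp i k y t2 hyG ht2G hyfix hlinf2 m hm
    have h2 : f t2 m ≤ (n : ℤ) := (hrange t2 ht2G m).2
    rw [ht2lo m hm]
    apply le_min <;> omega
  obtain ⟨w, hwG, hws, hwb, hwfix, -⟩ :=
    descend n f hrange hmono hnonexp i k y x hyG hyfix hyhigh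
      (∑ m, (t2 m - 1).toNat) t2 le_rfl ht2G ht2s ht2b ht2p
  have hxw : ∀ m : Fin d, x m ≤ w m := hxleast w hwG hws hwfix
  ----------------------------------------------------------------
  -- Conclusion
  ----------------------------------------------------------------
  rw [linf_le_iff]
  intro m
  by_cases h : (m : ℕ) < i
  · have h1 : y m ≤ z m := hyz m
    have h2 := hzb m h
    have h3 : x m ≤ w m := hxw m
    have h4 := hwb m h
    omega
  · exact hhigh m (le_of_not_gt h)
end

section
/- Let f be a violation-free 1DUniqueDMAC instance on the grid G = {1,…,n}^d. If x and y are two distinct fixed points of f, then there exist two distinct coordinates i and j such that |x_i − y_i| = |x_j − y_j| = ‖x − y‖∞. -/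
lemma le_linf {d : ℕ} (a b : Fin d → ℤ) (k : Fin d) :
    (a k - b k).natAbs ≤ linf a b :=
  Finset.le_sup (f := fun j => (a j - b j).natAbs) (Finset.mem_univ k)

lemma linf_le {d : ℕ} (a b : Fin d → ℤ) (m : ℕ)
    (h : ∀ k, (a k - b k).natAbs ≤ m) : linf a b ≤ m :=
  Finset.sup_le fun k _ => h k

lemma linf_comm {d : ℕ} (a b : Fin d → ℤ) : linf a b = linf b a :=
  Finset.sup_congr rfl fun k _ => by omega

lemma key {d n : ℕ} (f : (Fin d → ℤ) → (Fin d → ℤ))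
    (hnonexp : ∀ x y, inGrid n x → inGrid n y → linf (f x) (f y) ≤ linf x y)
    (huniq : ∀ x : Fin d → ℤ, inGrid n x → ∀ i : Fin d,
      ∃! y : Fin d → ℤ, inGrid n y ∧ (∀ j, j ≠ i → y j = x j) ∧ f y i = y i)
    (x y : Fin d → ℤ) (hxG : inGrid n x) (hyG : inGrid n y)
    (hfx : f x = x) (hfy : f y = y) (i : Fin d)
    (hi : x i - y i = (linf x y : ℤ)) (hM : 1 ≤ linf x y)
    (honly : ∀ j, j ≠ i → (x j - y j).natAbs < linf x y) : False := by
  set M := linf x y with hMdef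
  set z := Function.update x i (x i - 1) with hz
  have hzxj : ∀ j, j ≠ i → z j = x j := fun j hj => Function.update_of_ne hj _ _
  have hzi : z i = x i - 1 := Function.update_self _ _ _
  have hzG : inGrid n z := by
    intro j
    rcases eq_or_ne j i with rfl | hji
    · have h1 := (hxG j).2
      have h2 := (hyG j).1
      rw [hzi]
      constructor <;> omega
    · rw [hzxj j hji]; exact hxG j
  have hzx : linf z x ≤ 1 := by
    apply linf_le
    intro k
    rcases eq_or_ne k i with rfl | h
    · rw [hzi]; omega
    · rw [hzxj k h]; omega
  have hzy : linf z y ≤ M - 1 := by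
    apply linf_le
    intro k
    rcases eq_or_ne k i with rfl | h
    · rw [hzi]; omega
    · have := honly k h; rw [hzxj k h]; omega
  have h1 : (f z i - x i).natAbs ≤ 1 := by
    calc (f z i - x i).natAbs = (f z i - f x i).natAbs := by rw [hfx]
      _ ≤ linf (f z) (f x) := le_linf _ _ _
      _ ≤ linf z x := hnonexp z x hzG hxG
      _ ≤ 1 := hzx
  have h2 : (f z i - y i).natAbs ≤ M - 1 := by
    calc (f z i - y i).natAbs = (f z i - f y i).natAbs := by rw [hfy]
      _ ≤ linf (f z) (f y) := le_linf _ _ _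
      _ ≤ linf z y := hnonexp z y hzG hyG
      _ ≤ M - 1 := hzy
  have hfzi : f z i = z i := by rw [hzi]; omega
  obtain ⟨w, -, hw⟩ := huniq x hxG i
  have hxw : x = w := hw x ⟨hxG, fun j _ => rfl, by rw [hfx]⟩
  have hzw : z = w := hw z ⟨hzG, hzxj, hfzi⟩
  have : z i = x i := by rw [hzw, ← hxw]
  rw [hzi] at this
  omega

/-- If a violation-free 1DUniqueDMAC instance has two distinct fixed points
`x` and `y`, then at least two distinct coordinates attain the ℓ∞ distance
`‖x − y‖∞`. -/
theorem distinct_fixed_points_two_binding_dims (d n : ℕ) (hn : 1 ≤ n)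
    (f : (Fin d → ℤ) → (Fin d → ℤ))
    (hrange : ∀ x, inGrid n x → inGrid n (f x))
    (hmono : ∀ x y, inGrid n x → inGrid n y → x ≤ y → f x ≤ f y)
    (hnonexp : ∀ x y, inGrid n x → inGrid n y → linf (f x) (f y) ≤ linf x y)
    (hunit : ∀ x, inGrid n x → linf (f x) x ≤ 1)
    (huniq : ∀ x : Fin d → ℤ, inGrid n x → ∀ i : Fin d,
      ∃! y : Fin d → ℤ, inGrid n y ∧ (∀ j, j ≠ i → y j = x j) ∧ f y i = y i)
    (x y : Fin d → ℤ) (hxG : inGrid n x) (hyG : inGrid n y)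
    (hfx : f x = x) (hfy : f y = y) (hne : x ≠ y) :
    ∃ i j : Fin d, i ≠ j ∧ (x i - y i).natAbs = linf x y ∧
      (x j - y j).natAbs = linf x y := by
  obtain ⟨k, hk⟩ := Function.ne_iff.mp hne
  have hMpos : 1 ≤ linf x y := by
    have := le_linf x y k
    omega
  have hd : (Finset.univ : Finset (Fin d)).Nonempty := ⟨k, Finset.mem_univ k⟩
  obtain ⟨i, -, hiM⟩ := Finset.exists_mem_eq_sup Finset.univ hd
    (fun k => (x k - y k).natAbs)
  have hiM : (x i - y i).natAbs = linf x y := hiM.symm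
  by_contra hcon
  push_neg at hcon
  have honly : ∀ j, j ≠ i → (x j - y j).natAbs < linf x y := by
    intro j hj
    have h1 := le_linf x y j
    have h2 := hcon i j (Ne.symm hj) hiM
    omega
  rcases Int.natAbs_eq (x i - y i) with hcase | hcase
  · exact key f hnonexp huniq x y hxG hyG hfx hfy i (by omega) hMpos honly
  · refine key f hnonexp huniq y x hyG hxG hfy hfx i ?_ ?_ ?_
    · rw [linf_comm]; omega
    · rw [linf_comm]; exact hMpos
    · intro j hj; rw [linf_comm]; have := honly j hj; omega
end

section
/- Paths of two-dimensional fixed points: let G = {1,…,n}^3 and let f : G → G be monotone, non-expansive in ℓ∞, and with unit displacements (‖f(x) − x‖∞ ≤ 1 for all x ∈ G). Fix c with 1 ≤ c ≤ n and call x ∈ G with x_3 = c a two-dimensional fixed point of the slice if f_1(x) = x_1 and f_2(x) = x_2. Let x be a two-dimensional fixed point of the slice, let p be the pointwise-least two-dimensional fixed point of the slice, and let q be the pointwise-greatest two-dimensional fixed point of the slice. Then: (i) there exist k ≥ 1 and two-dimensional fixed points v^1, …, v^k of the slice with v^1 = p, v^k = x, and for every i < k, v^i ≤ v^{i+1} and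 ‖v^{i+1} − v^i‖∞ = 1; (ii) there exist m ≥ 1 and two-dimensional fixed points u^1, …, u^m of the slice with u^1 = x, u^m = q, and for every i < m, u^i ≤ u^{i+1} and ‖u^{i+1} − u^i‖∞ = 1. -/
/-- Membership in the grid `{1, …, n}^3 ⊆ ℤ^3`. -/
def inGrid3 (n : ℕ) (x : Fin 3 → ℤ) : Prop :=
  ∀ i, 1 ≤ x i ∧ x i ≤ (n : ℤ)

/-- The ℓ∞ distance `‖x − y‖∞ = max_i |x_i − y_i|` (as a natural number). -/
def linf3 (x y : Fin 3 → ℤ) : ℕ :=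
  Finset.univ.sup fun i => (x i - y i).natAbs

lemma linf3_le_iff (x y : Fin 3 → ℤ) (m : ℕ) :
    linf3 x y ≤ m ↔ ∀ i, (x i - y i).natAbs ≤ m := by
  simp [linf3, Finset.sup_le_iff]

lemma coord_le_linf3 (x y : Fin 3 → ℤ) (i : Fin 3) :
    (x i - y i).natAbs ≤ linf3 x y :=
  Finset.le_sup (f := fun j => (x j - y j).natAbs) (Finset.mem_univ i)

lemma fin3_cases : ∀ i : Fin 3, i = 0 ∨ i = 1 ∨ i = 2 := by decide

/-- Step lemma: between two distinct comparable 2D fixed points of the slice,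
there is a 2D fixed point at ℓ∞ distance 1 above the smaller one. -/
lemma step_lemma (n : ℕ) (f : (Fin 3 → ℤ) → (Fin 3 → ℤ))
    (hrange : ∀ x, inGrid3 n x → inGrid3 n (f x))
    (hmono : ∀ x y, inGrid3 n x → inGrid3 n y → x ≤ y → f x ≤ f y)
    (hnonexp : ∀ x y, inGrid3 n x → inGrid3 n y → linf3 (f x) (f y) ≤ linf3 x y)
    (c : ℤ)
    (a b : Fin 3 → ℤ)
    (haG : inGrid3 n a) (hac : a 2 = c) (ha1 : f a 0 = a 0) (ha2 : f a 1 = a 1)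
    (hbG : inGrid3 n b) (hbc : b 2 = c) (hb1 : f b 0 = b 0) (hb2 : f b 1 = b 1)
    (hab : a ≤ b) (hne : a ≠ b) :
    ∃ w, inGrid3 n w ∧ w 2 = c ∧ f w 0 = w 0 ∧ f w 1 = w 1 ∧
      a ≤ w ∧ w ≤ b ∧ linf3 w a = 1 := by
  rw [Pi.le_def] at hab
  set d : ℤ := max (b 0 - a 0) (b 1 - a 1) with hd
  have hne' : ∃ i : Fin 3, a i < b i := by
    by_contra h
    push_neg at h
    exact hne (funext fun i => le_antisymm (hab i) (h i))
  have hd1 : 1 ≤ d := by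
    obtain ⟨i, hi⟩ := hne'
    rcases fin3_cases i with h | h | h <;> subst h
    · omega
    · omega
    · rw [hac, hbc] at hi; omega
  obtain ⟨istar, histar, hbstar⟩ : ∃ i : Fin 3, (i = 0 ∨ i = 1) ∧ b i - a i = d := by
    rcases le_total (b 0 - a 0) (b 1 - a 1) with h | h
    · exact ⟨1, Or.inr rfl, by omega⟩
    · exact ⟨0, Or.inl rfl, by omega⟩
  have hc1 : (1:ℤ) ≤ c := by rw [← hac]; exact (haG 2).1
  have hcn : c ≤ (n:ℤ) := by rw [← hac]; exact (haG 2).2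
  set F : (Fin 3 → ℤ) → (Fin 3 → ℤ) := fun z i => if i = 2 then c else f z i with hF
  set P : (Fin 3 → ℤ) → Prop := fun z =>
    inGrid3 n z ∧ z 2 = c ∧ (∀ i, a i ≤ z i) ∧ (∀ i, z i ≤ a i + 1) ∧
      (∀ i, z i ≤ b i) ∧ (∀ i, b i - z i ≤ d - 1) with hP
  set u : Fin 3 → ℤ := fun i => if i = 2 then c else min (a i + 1) (b i) with hu
  have hdle : ∀ i : Fin 3, b i - a i ≤ d := by
    intro i
    rcases fin3_cases i with h | h | h <;> subst h
    · omega
    · omega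
    · rw [hac, hbc]; omega
  have ha2' := haG 2
  have hb2' := hbG 2
  have hPu : P u := by
    rw [hP]
    refine ⟨fun i => ?_, by simp [hu], fun i => ?_, fun i => ?_, fun i => ?_, fun i => ?_⟩ <;>
    · have h1 := haG i
      have h2 := hbG i
      have h3 := hab i
      have h4 := hdle i
      rcases fin3_cases i with h | h | h <;> subst h <;>
        simp only [hu, hac, if_true, if_false, show (0:Fin 3) ≠ 2 by decide,
          show (1:Fin 3) ≠ 2 by decide, reduceIte] <;>
        first
          | (constructor <;> omega)
          | omega
  -- preservation of the invariant
  have hPstep : ∀ z, P z → P (F z) := by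
    intro z hz
    rw [hP] at hz
    obtain ⟨hzG, hzc, hza, hza1, hzb, hzd⟩ := hz
    have hfzG := hrange z hzG
    have hazle : a ≤ z := fun i => hza i
    have hzble : z ≤ b := fun i => hzb i
    have hmaz := hmono a z haG hzG hazle
    have hmzb := hmono z b hzG hbG hzble
    have hza_linf : linf3 z a ≤ 1 := by
      rw [linf3_le_iff]; intro i; have := hza i; have := hza1 i; omega
    have hfa_bound : ∀ i, (f z i - f a i).natAbs ≤ 1 :=
      fun i => le_trans (coord_le_linf3 _ _ i) (le_trans (hnonexp z a hzG haG) hza_linf)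
    have hzb_linf : linf3 z b ≤ (d - 1).toNat := by
      rw [linf3_le_iff]; intro i; have := hzb i; have := hzd i; omega
    have hfb_bound : ∀ i, (f z i - f b i).natAbs ≤ (d - 1).toNat :=
      fun i => le_trans (coord_le_linf3 _ _ i) (le_trans (hnonexp z b hzG hbG) hzb_linf)
    have h0 : F z 0 = f z 0 := by simp [hF]
    have h1 : F z 1 = f z 1 := by simp [hF]
    have h2 : F z 2 = c := by simp [hF]
    have k0a : a 0 ≤ f z 0 := by have := hmaz 0; rwa [ha1] at this
    have k1a : a 1 ≤ f z 1 := by have := hmaz 1; rwa [ha2] at this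
    have k0b : f z 0 ≤ b 0 := by have := hmzb 0; rwa [hb1] at this
    have k1b : f z 1 ≤ b 1 := by have := hmzb 1; rwa [hb2] at this
    have k0c : f z 0 ≤ a 0 + 1 := by have := hfa_bound 0; rw [ha1] at this; omega
    have k1c : f z 1 ≤ a 1 + 1 := by have := hfa_bound 1; rw [ha2] at this; omega
    have k0d : b 0 - f z 0 ≤ d - 1 := by have := hfb_bound 0; rw [hb1] at this; omega
    have k1d : b 1 - f z 1 ≤ d - 1 := by have := hfb_bound 1; rw [hb2] at this; omega
    have ga0 := haG 0
    have ga1 := haG 1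
    have gb0 := hbG 0
    have gb1 := hbG 1
    rw [hP]
    refine ⟨fun i => ?_, h2, fun i => ?_, fun i => ?_, fun i => ?_, fun i => ?_⟩ <;>
      rcases fin3_cases i with h | h | h <;> subst h <;>
      simp only [h0, h1, h2] <;>
      first
        | (constructor <;> omega)
        | omega
  -- F z at istar equals a istar + 1
  have hFstar : ∀ z, P z → F z istar = a istar + 1 := by
    intro z hz
    have hz' := hPstep z hz
    rw [hP] at hz'
    obtain ⟨_, _, _, hza1, _, hzd⟩ := hz'
    have := hza1 istar
    have := hzd istar
    omega
  -- F is monotone on the grid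
  have hFmono : ∀ y z, inGrid3 n y → inGrid3 n z → y ≤ z → F y ≤ F z := by
    intro y z hy hz hyz i
    have hm := hmono y z hy hz hyz
    rcases fin3_cases i with h | h | h <;> subst h <;> simp only [hF] <;> norm_num
    · exact hm 0
    · exact hm 1
  -- the decreasing iteration
  set zseq : ℕ → (Fin 3 → ℤ) := fun k => F^[k] u with hz
  have hzsucc : ∀ k, zseq (k+1) = F (zseq k) := by
    intro k; rw [hz]; simp [Function.iterate_succ_apply']
  have hPz : ∀ k, P (zseq k) := by
    intro k; induction k with
    | zero => simpa [hz] using hPu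
    | succ k ih => rw [hzsucc]; exact hPstep _ ih
  have hFu_le : F u ≤ u := by
    have hq := hPstep u hPu
    rw [hP] at hq
    obtain ⟨_, hqc, _, hqa1, hqb, _⟩ := hq
    intro i
    have g1 := hqa1 i
    have g2 := hqb i
    rcases fin3_cases i with h | h | h <;> subst h <;>
      simp only [hu, hac] at g1 g2 ⊢ <;>
      first
        | omega
        | (rw [hqc]; rfl)
  have hdec : ∀ k, zseq (k+1) ≤ zseq k := by
    intro k; induction k with
    | zero =>
      calc zseq 1 = F u := by rw [hzsucc 0]; rfl
      _ ≤ u := hFu_le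
      _ = zseq 0 := rfl
    | succ k ih =>
      calc zseq (k+1+1) = F (zseq (k+1)) := hzsucc (k+1)
      _ ≤ F (zseq k) := hFmono _ _ (hPz (k+1)).1 (hPz k).1 ih
      _ = zseq (k+1) := (hzsucc k).symm
  -- stabilization
  set m : ℕ → ℕ := fun k => ((zseq k 0 - a 0) + (zseq k 1 - a 1)).toNat with hm
  have hstep : ∀ k, zseq (k+1) = zseq k ∨ m (k+1) < m k := by
    intro k
    by_cases h : zseq (k+1) = zseq k
    · exact Or.inl h
    · right
      have hne2 : ∃ i, zseq (k+1) i ≠ zseq k i := by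
        by_contra hx; push_neg at hx; exact h (funext hx)
      obtain ⟨i, hi⟩ := hne2
      have d0 := hdec k 0
      have d1 := hdec k 1
      have a0 := (hPz (k+1)).2.2.1 0
      have a1 := (hPz (k+1)).2.2.1 1
      have e2 : zseq (k+1) 2 = zseq k 2 := by
        rw [(hPz (k+1)).2.1, (hPz k).2.1]
      have hlt : zseq (k+1) 0 < zseq k 0 ∨ zseq (k+1) 1 < zseq k 1 := by
        rcases fin3_cases i with h' | h' | h' <;> subst h'
        · left; exact lt_of_le_of_ne d0 hi
        · right; exact lt_of_le_of_ne d1 hi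
        · exact absurd e2 hi
      have b0 := (hPz k).2.2.1 0
      have b1 := (hPz k).2.2.1 1
      have key : ∀ (A B C D E G : ℤ), A ≤ C → B ≤ D → (A < C ∨ B < D) → E ≤ A → G ≤ B →
          (A - E + (B - G)).toNat < (C - E + (D - G)).toNat := by
        intro A B C D E G h1 h2 h3 h4 h5
        rcases h3 with h3 | h3 <;> omega
      exact key _ _ _ _ _ _ d0 d1 hlt a0 a1
  have hstab : ∃ j, zseq (j+1) = zseq j := by
    by_contra h
    push_neg at h
    have key : ∀ k, m k + k ≤ m 0 := by
      intro k; induction k with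
      | zero => omega
      | succ k ih =>
        rcases hstep k with h' | h'
        · exact absurd h' (h k)
        · omega
    have := key (m 0 + 1)
    omega
  obtain ⟨j, hj⟩ := hstab
  have hfix : F (zseq (j+1)) = zseq (j+1) := by
    conv_lhs => rw [hj]
    exact (hzsucc j).symm
  have hPw := hPz (j+1)
  rw [hP] at hPw
  obtain ⟨hwG, hwc, hwa, hwa1, hwb, hwd⟩ := hPw
  have hw0 : f (zseq (j+1)) 0 = zseq (j+1) 0 := by
    conv_rhs => rw [← hfix]
    simp [hF]
  have hw1 : f (zseq (j+1)) 1 = zseq (j+1) 1 := by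
    conv_rhs => rw [← hfix]
    simp [hF]
  have hwstar : zseq (j+1) istar = a istar + 1 := by
    rw [hzsucc]; exact hFstar _ (hPz j)
  refine ⟨zseq (j+1), hwG, hwc, hw0, hw1, fun i => hwa i, fun i => hwb i, ?_⟩
  apply le_antisymm
  · rw [linf3_le_iff]; intro i; have := hwa i; have := hwa1 i; omega
  · have h1 : ((zseq (j+1) istar - a istar).natAbs) = 1 := by omega
    calc 1 = (zseq (j+1) istar - a istar).natAbs := h1.symm
    _ ≤ linf3 (zseq (j+1)) a := coord_le_linf3 _ _ _

/-- Monotone unit-step path between comparable 2D fixed points of the slice. -/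
lemma path_up (n : ℕ) (f : (Fin 3 → ℤ) → (Fin 3 → ℤ))
    (hrange : ∀ x, inGrid3 n x → inGrid3 n (f x))
    (hmono : ∀ x y, inGrid3 n x → inGrid3 n y → x ≤ y → f x ≤ f y)
    (hnonexp : ∀ x y, inGrid3 n x → inGrid3 n y → linf3 (f x) (f y) ≤ linf3 x y)
    (c : ℤ) :
    ∀ (N : ℕ) (a b : Fin 3 → ℤ), ((b 0 - a 0) + (b 1 - a 1)).toNat ≤ N →
      inGrid3 n a → a 2 = c → f a 0 = a 0 → f a 1 = a 1 →
      inGrid3 n b → b 2 = c → f b 0 = b 0 → f b 1 = b 1 → a ≤ b →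
      ∃ (k : ℕ) (v : ℕ → Fin 3 → ℤ), v 0 = a ∧ v k = b ∧
        (∀ i ≤ k, inGrid3 n (v i) ∧ v i 2 = c ∧
          f (v i) 0 = v i 0 ∧ f (v i) 1 = v i 1) ∧
        (∀ i < k, v i ≤ v (i + 1) ∧ linf3 (v (i + 1)) (v i) = 1) := by
  intro N
  induction N with
  | zero =>
    intro a b hN haG hac ha1 ha2 hbG hbc hb1 hb2 hab
    have heq : a = b := by
      funext i
      have h0 : a 0 ≤ b 0 := hab 0
      have h1 : a 1 ≤ b 1 := hab 1
      rcases fin3_cases i with h | h | h <;> subst h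
      · omega
      · omega
      · rw [hac, hbc]
    subst heq
    exact ⟨0, fun _ => a, rfl, rfl, fun i _ => ⟨haG, hac, ha1, ha2⟩,
      fun i hi => absurd hi (by omega)⟩
  | succ N ih =>
    intro a b hN haG hac ha1 ha2 hbG hbc hb1 hb2 hab
    by_cases heq : a = b
    · subst heq
      exact ⟨0, fun _ => a, rfl, rfl, fun i _ => ⟨haG, hac, ha1, ha2⟩,
        fun i hi => absurd hi (by omega)⟩
    · obtain ⟨w, hwG, hwc, hw0, hw1, haw, hwb, hlinf⟩ :=
        step_lemma n f hrange hmono hnonexp c a b haG hac ha1 ha2 hbG hbc hb1 hb2 hab heq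
      have hwa_ne : w ≠ a := by
        intro h
        rw [h] at hlinf
        have : linf3 a a = 0 := by simp [linf3]
        omega
      obtain ⟨i0, hi0⟩ : ∃ i, a i < w i := by
        by_contra hx
        push_neg at hx
        exact hwa_ne (funext fun i => le_antisymm (hx i) (haw i))
      have hNw : ((b 0 - w 0) + (b 1 - w 1)).toNat ≤ N := by
        have g0 : a 0 ≤ w 0 := haw 0
        have g1 : a 1 ≤ w 1 := haw 1
        have g0' : w 0 ≤ b 0 := hwb 0
        have g1' : w 1 ≤ b 1 := hwb 1
        have hstrict : a 0 < w 0 ∨ a 1 < w 1 := by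
          rcases fin3_cases i0 with h | h | h <;> subst h
          · exact Or.inl hi0
          · exact Or.inr hi0
          · rw [hac, hwc] at hi0; omega
        rcases hstrict with h | h <;> omega
      obtain ⟨k, v, hv0, hvk, hvFP, hvstep⟩ :=
        ih w b hNw hwG hwc hw0 hw1 hbG hbc hb1 hb2 hwb
      refine ⟨k + 1, fun j => if j = 0 then a else v (j - 1), by norm_num, ?_, ?_, ?_⟩
      · simp only [if_neg (Nat.succ_ne_zero k), Nat.add_sub_cancel]
        exact hvk
      · intro i hik
        by_cases h : i = 0
        · subst h
          simp only [if_pos rfl]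
          exact ⟨haG, hac, ha1, ha2⟩
        · simp only [if_neg h]
          exact hvFP (i - 1) (by omega)
      · intro i hik
        by_cases h : i = 0
        · subst h
          simp only [if_pos rfl, if_neg (Nat.one_ne_zero), Nat.sub_self]
          have e : (1 : ℕ) - 1 = 0 := rfl
          rw [e, hv0]
          exact ⟨haw, hlinf⟩
        · obtain ⟨j, rfl⟩ : ∃ j, i = j + 1 := ⟨i - 1, by omega⟩
          simp only [if_neg h, if_neg (Nat.succ_ne_zero (j + 1)), Nat.add_sub_cancel]
          exact hvstep j (by omega)

/-- Paths of two-dimensional fixed points: any two-dimensional fixed point of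
the slice `{z : z_3 = c}` is connected to the least (resp. greatest)
two-dimensional fixed point of the slice by a monotone path of
two-dimensional fixed points whose consecutive points are at ℓ∞ distance 1. -/
theorem paths_of_two_dimensional_fixed_points (n : ℕ) (hn : 1 ≤ n)
    (f : (Fin 3 → ℤ) → (Fin 3 → ℤ))
    (hrange : ∀ x, inGrid3 n x → inGrid3 n (f x))
    (hmono : ∀ x y, inGrid3 n x → inGrid3 n y → x ≤ y → f x ≤ f y)
    (hnonexp : ∀ x y, inGrid3 n x → inGrid3 n y → linf3 (f x) (f y) ≤ linf3 x y)
    (hunit : ∀ x, inGrid3 n x → linf3 (f x) x ≤ 1)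
    (c : ℤ) (hc1 : 1 ≤ c) (hcn : c ≤ (n : ℤ))
    (x p q : Fin 3 → ℤ)
    -- `x` is a two-dimensional fixed point of the slice
    (hxG : inGrid3 n x) (hxc : x 2 = c) (hx1 : f x 0 = x 0) (hx2 : f x 1 = x 1)
    -- `p` is the least two-dimensional fixed point of the slice
    (hpG : inGrid3 n p) (hpc : p 2 = c) (hp1 : f p 0 = p 0) (hp2 : f p 1 = p 1)
    (hpleast : ∀ z, inGrid3 n z → z 2 = c → f z 0 = z 0 → f z 1 = z 1 → p ≤ z)
    -- `q` is the greatest two-dimensional fixed point of the slice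
    (hqG : inGrid3 n q) (hqc : q 2 = c) (hq1 : f q 0 = q 0) (hq2 : f q 1 = q 1)
    (hqgreatest : ∀ z, inGrid3 n z → z 2 = c → f z 0 = z 0 → f z 1 = z 1 → z ≤ q) :
    -- (i) path from p to x
    (∃ (k : ℕ) (v : ℕ → Fin 3 → ℤ), v 0 = p ∧ v k = x ∧
      (∀ i ≤ k, inGrid3 n (v i) ∧ v i 2 = c ∧
        f (v i) 0 = v i 0 ∧ f (v i) 1 = v i 1) ∧
      (∀ i < k, v i ≤ v (i + 1) ∧ linf3 (v (i + 1)) (v i) = 1)) ∧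
    -- (ii) path from x to q
    (∃ (m : ℕ) (u : ℕ → Fin 3 → ℤ), u 0 = x ∧ u m = q ∧
      (∀ i ≤ m, inGrid3 n (u i) ∧ u i 2 = c ∧
        f (u i) 0 = u i 0 ∧ f (u i) 1 = u i 1) ∧
      (∀ i < m, u i ≤ u (i + 1) ∧ linf3 (u (i + 1)) (u i) = 1)) := by
  constructor
  · exact path_up n f hrange hmono hnonexp c ((x 0 - p 0) + (x 1 - p 1)).toNat p x le_rfl
      hpG hpc hp1 hp2 hxG hxc hx1 hx2 (hpleast x hxG hxc hx1 hx2)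
  · exact path_up n f hrange hmono hnonexp c ((q 0 - x 0) + (q 1 - x 1)).toNat x q le_rfl
      hxG hxc hx1 hx2 hqG hqc hq1 hq2 (hqgreatest x hxG hxc hx1 hx2)
end
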